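/- For every real Δ > 0 and every ε > 0 there exist an integer n ≥ 3, a real p ∈ (0,1) with n·p = Δ, a malicious Bayesian congestion game Ψ on n players with linear latency functions (f_e(x) = a_e·x with a_e > 0) and identical type probability p_u = p for all players, and a pure Bayesian Nash equilibrium σ of Ψ, such that SC(Ψ,σ) ≥ (Δ + 2 − ε) · Opt(Γ_Ψ). -/

import Mathlib

open Finset

/-- The data of a malicious Bayesian congestion game: strategy sets (sets of
nonempty subsets of resources), type probabilities, latency functions. -/
structure Game (N E : Type) where
  S : N → Finset (Finset E)
  p : N → ℝ
  f : E → ℝ → ℝ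

namespace Game

variable {N E : Type} [Fintype N] [DecidableEq N] [Fintype E] [DecidableEq E]

/-- A pure strategy profile: each player chooses a pair (selfish strategy, malicious strategy). -/
abbrev Profile (N E : Type) := N → Finset E × Finset E

/-- Validity: both type-agents of each player choose strategies from the player's strategy set. -/
def Valid (G : Game N E) (σ : Profile N E) : Prop :=
  ∀ u, (σ u).1 ∈ G.S u ∧ (σ u).2 ∈ G.S u

/-- Expected selfish load on resource `e`, with player `u` omitted. -/
noncomputable def selfLoadEx (G : Game N E) (σ : Profile N E) (u : N) (e : E) : ℝ :=
  ∑ v ∈ Finset.univ.erase u, if e ∈ (σ v).1 then 1 - G.p v else 0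

/-- Expected malicious load on resource `e`, with player `u` omitted. -/
noncomputable def malLoadEx (G : Game N E) (σ : Profile N E) (u : N) (e : E) : ℝ :=
  ∑ v ∈ Finset.univ.erase u, if e ∈ (σ v).2 then G.p v else 0

/-- Private (expected) cost of player `u` in the pure profile `σ`. -/
noncomputable def PC (G : Game N E) (σ : Profile N E) (u : N) : ℝ :=
  ∑ e ∈ (σ u).1, G.f e (G.selfLoadEx σ u e + G.malLoadEx σ u e + 1)

/-- Social cost of a pure profile: weighted average latency of the selfish type-agents. -/
noncomputable def SC (G : Game N E) (σ : Profile N E) : ℝ :=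
  (∑ u, (1 - G.p u) * G.PC σ u) / ((Fintype.card N : ℝ) - ∑ u, G.p u)

/-- Replace the selfish strategy of player `u` by `t`. -/
def updS (σ : Profile N E) (u : N) (t : Finset E) : Profile N E :=
  Function.update σ u (t, (σ u).2)

/-- Replace the malicious strategy of player `u` by `t`. -/
def updM (σ : Profile N E) (u : N) (t : Finset E) : Profile N E :=
  Function.update σ u ((σ u).1, t)

/-- Pure Bayesian Nash equilibrium: no selfish type-agent can decrease its private cost and
no malicious type-agent can increase the social cost by a unilateral deviation. -/
def IsPureBNE (G : Game N E) (σ : Profile N E) : Prop :=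
  G.Valid σ ∧ ∀ u : N, ∀ t ∈ G.S u,
    G.PC σ u ≤ G.PC (updS σ u t) u ∧ G.SC (updM σ u t) ≤ G.SC σ

end Game
namespace Game

variable {N E : Type} [Fintype N] [DecidableEq N] [Fintype E] [DecidableEq E]

/-- A pure strategy profile of the corresponding (non-malicious) congestion game `Γ_Ψ`. -/
abbrev CProfile (N E : Type) := N → Finset E

/-- Validity for congestion-game profiles. -/
def CValid (G : Game N E) (s : CProfile N E) : Prop := ∀ u, s u ∈ G.S u

/-- Load (number of players) on resource `e`. -/
def load (s : CProfile N E) (e : E) : ℕ := (Finset.univ.filter fun u => e ∈ s u).card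

/-- Private cost of player `u` in the congestion game `Γ_Ψ`. -/
noncomputable def CPC (G : Game N E) (s : CProfile N E) (u : N) : ℝ :=
  ∑ e ∈ s u, G.f e (load s e)

/-- Social cost (average latency) in the congestion game `Γ_Ψ`. -/
noncomputable def CSC (G : Game N E) (s : CProfile N E) : ℝ :=
  (∑ e, (load s e : ℝ) * G.f e (load s e)) / (Fintype.card N : ℝ)

/-- Optimum social cost of the congestion game `Γ_Ψ`. -/
noncomputable def COpt (G : Game N E) : ℝ :=
  sInf {x | ∃ s : CProfile N E, G.CValid s ∧ G.CSC s = x}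

/-- Pure Nash equilibrium of the congestion game `Γ_Ψ`. -/
def IsPureNE (G : Game N E) (s : CProfile N E) : Prop :=
  G.CValid s ∧ ∀ u : N, ∀ t ∈ G.S u, G.CPC s u ≤ G.CPC (Function.update s u t) u

end Game

-- ==== auxiliary generic lemmas ====
set_option linter.unusedSectionVars false
section AuxGeneric
open Game
variable {N E : Type} [Fintype N] [DecidableEq N] [Fintype E] [DecidableEq E]

lemma updS_fst (σ : Game.Profile N E) (u : N) (t : Finset E) :
    ((Game.updS σ u t) u).1 = t := by
  simp [Game.updS]

lemma updS_ne (σ : Game.Profile N E) (u v : N) (t : Finset E) (h : v ≠ u) :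
    (Game.updS σ u t) v = σ v := by
  simp [Game.updS, Function.update_of_ne h]

lemma updM_fst (σ : Game.Profile N E) (u : N) (t : Finset E) (w : N) :
    ((Game.updM σ u t) w).1 = (σ w).1 := by
  rcases eq_or_ne w u with rfl | h
  · simp [Game.updM]
  · simp [Game.updM, Function.update_of_ne h]

lemma selfLoadEx_updS (G : Game N E) (σ : Game.Profile N E) (u : N) (t : Finset E) (e : E) :
    G.selfLoadEx (Game.updS σ u t) u e = G.selfLoadEx σ u e := by
  refine Finset.sum_congr rfl fun v hv => ?_
  rw [updS_ne σ u v t (Finset.ne_of_mem_erase hv)]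

lemma malLoadEx_updS (G : Game N E) (σ : Game.Profile N E) (u : N) (t : Finset E) (e : E) :
    G.malLoadEx (Game.updS σ u t) u e = G.malLoadEx σ u e := by
  refine Finset.sum_congr rfl fun v hv => ?_
  rw [updS_ne σ u v t (Finset.ne_of_mem_erase hv)]

lemma PC_updS (G : Game N E) (σ : Game.Profile N E) (u : N) (t : Finset E) :
    G.PC (Game.updS σ u t) u
      = ∑ e ∈ t, G.f e (G.selfLoadEx σ u e + G.malLoadEx σ u e + 1) := by
  unfold Game.PC
  rw [updS_fst]
  exact Finset.sum_congr rfl fun e _ => by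
    rw [selfLoadEx_updS, malLoadEx_updS]

lemma selfLoadEx_updM (G : Game N E) (σ : Game.Profile N E) (u : N) (t : Finset E)
    (v : N) (e : E) :
    G.selfLoadEx (Game.updM σ u t) v e = G.selfLoadEx σ v e := by
  refine Finset.sum_congr rfl fun w _ => ?_
  rw [updM_fst]

lemma malLoadEx_updM_le (G : Game N E) (σ : Game.Profile N E) (u : N) (t : Finset E)
    (hp0 : ∀ w, 0 ≤ G.p w) (hsub : t ⊆ (σ u).2) (v : N) (e : E) :
    G.malLoadEx (Game.updM σ u t) v e ≤ G.malLoadEx σ v e := by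
  refine Finset.sum_le_sum fun w _ => ?_
  rcases eq_or_ne w u with rfl | h
  · simp only [Game.updM, Function.update_self]
    by_cases he : e ∈ t
    · rw [if_pos he, if_pos (hsub he)]
    · rw [if_neg he]
      split_ifs with h'
      · exact hp0 w
      · exact le_refl 0
  · rw [Game.updM, Function.update_of_ne h]

lemma SC_updM_le (G : Game N E) (σ : Game.Profile N E) (u : N) (t : Finset E)
    (hmono : ∀ e, Monotone (G.f e))
    (hp0 : ∀ w, 0 ≤ G.p w) (hp1 : ∀ w, G.p w ≤ 1)
    (hsub : t ⊆ (σ u).2)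
    (hden : 0 < (Fintype.card N : ℝ) - ∑ w, G.p w) :
    G.SC (Game.updM σ u t) ≤ G.SC σ := by
  unfold Game.SC
  have hPC : ∀ v, G.PC (Game.updM σ u t) v ≤ G.PC σ v := by
    intro v
    unfold Game.PC
    rw [updM_fst]
    refine Finset.sum_le_sum fun e _ => ?_
    apply hmono e
    rw [selfLoadEx_updM]
    have := malLoadEx_updM_le G σ u t hp0 hsub v e
    linarith
  apply (div_le_div_iff_of_pos_right hden).mpr
  exact Finset.sum_le_sum fun v _ =>
    mul_le_mul_of_nonneg_left (hPC v) (by linarith [hp1 v])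

end AuxGeneric

-- construction part (appended to aux1 content when testing)
section Construction
open Game

noncomputable def gA (n : ℕ) (q : ℝ) (j : Fin (n+1)) : ℝ := q ^ (min j.1 (n-1))

noncomputable def gG (n : ℕ) (p q : ℝ) : Game (Fin n) (Fin (n+1)) :=
  ⟨fun i => {{i.castSucc}, {i.succ}, Finset.univ}, fun _ => p, fun e x => gA n q e * x⟩

lemma gG_S (n : ℕ) (p q : ℝ) (i : Fin n) :
    (gG n p q).S i = {{i.castSucc}, {i.succ}, Finset.univ} := rfl
lemma gG_p (n : ℕ) (p q : ℝ) (i : Fin n) : (gG n p q).p i = p := rfl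
lemma gG_f (n : ℕ) (p q : ℝ) (e : Fin (n+1)) (x : ℝ) :
    (gG n p q).f e x = gA n q e * x := rfl

def gσ (n : ℕ) : Game.Profile (Fin n) (Fin (n+1)) := fun i => ({i.castSucc}, Finset.univ)

def gs (n : ℕ) : Game.CProfile (Fin n) (Fin (n+1)) := fun i => {i.succ}

lemma gmal (n : ℕ) (p q : ℝ) (u : Fin n) (e : Fin (n+1)) :
    (gG n p q).malLoadEx (gσ n) u e = ((n:ℝ) - 1) * p := by
  have h1 : 1 ≤ n := u.pos
  unfold Game.malLoadEx
  simp only [gσ, gG_p, Finset.mem_univ, if_true]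
  rw [Finset.sum_const, Finset.card_erase_of_mem (Finset.mem_univ u), Finset.card_univ,
    Fintype.card_fin, nsmul_eq_mul, Nat.cast_sub h1, Nat.cast_one]

lemma gself_cast (n : ℕ) (p q : ℝ) (u : Fin n) :
    (gG n p q).selfLoadEx (gσ n) u u.castSucc = 0 := by
  unfold Game.selfLoadEx
  refine Finset.sum_eq_zero fun v hv => ?_
  simp only [gσ, Finset.mem_singleton]
  rw [if_neg]
  intro h
  exact Finset.ne_of_mem_erase hv (Fin.castSucc_injective n h.symm)

lemma gself_succ_lt (n : ℕ) (p q : ℝ) (u : Fin n) (h : u.1 + 1 < n) :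
    (gG n p q).selfLoadEx (gσ n) u u.succ = 1 - p := by
  unfold Game.selfLoadEx
  have hmem : (⟨u.1 + 1, h⟩ : Fin n) ∈ Finset.univ.erase u := by
    refine Finset.mem_erase.mpr ⟨?_, Finset.mem_univ _⟩
    intro hh
    have := congrArg Fin.val hh
    simp at this
  rw [Finset.sum_eq_single_of_mem _ hmem ?_]
  · simp only [gσ, Finset.mem_singleton, gG_p]
    rw [if_pos]
    exact Fin.ext (by simp)
  · intro v hv hne
    simp only [gσ, Finset.mem_singleton]
    rw [if_neg]
    intro hh
    apply hne
    exact Fin.ext (by have := congrArg Fin.val hh; simpa using this.symm)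

lemma gself_succ_last (n : ℕ) (p q : ℝ) (u : Fin n) (h : u.1 + 1 = n) :
    (gG n p q).selfLoadEx (gσ n) u u.succ = 0 := by
  unfold Game.selfLoadEx
  refine Finset.sum_eq_zero fun v hv => ?_
  simp only [gσ, Finset.mem_singleton]
  rw [if_neg]
  intro hh
  have := congrArg Fin.val hh
  simp only [Fin.val_succ, Fin.coe_castSucc] at this
  have h2 := v.isLt
  omega

lemma selfLoadEx_nonneg' {N E : Type} [Fintype N] [DecidableEq N] [DecidableEq E]
    (G : Game N E) (σ : Game.Profile N E) (u : N) (e : E) (hp1 : ∀ v, G.p v ≤ 1) :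
    0 ≤ G.selfLoadEx σ u e := by
  refine Finset.sum_nonneg fun v _ => ?_
  split_ifs with h
  · linarith [hp1 v]
  · exact le_refl 0

lemma gPC (n : ℕ) (p q : ℝ) (u : Fin n) :
    (gG n p q).PC (gσ n) u = q ^ u.1 * (((n:ℝ) - 1) * p + 1) := by
  unfold Game.PC
  show ∑ e ∈ {u.castSucc}, _ = _
  rw [Finset.sum_singleton, gself_cast, gmal, gG_f]
  unfold gA
  rw [Fin.coe_castSucc, min_eq_left (by have := u.isLt; omega)]
  ring

lemma gSC (n : ℕ) (p q : ℝ) (hn : 0 < n) (hp : p < 1) :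
    (gG n p q).SC (gσ n)
      = (((n:ℝ) - 1) * p + 1) * (∑ i ∈ Finset.range n, q ^ i) / n := by
  unfold Game.SC
  have hden : ((Fintype.card (Fin n) : ℝ) - ∑ u : Fin n, (gG n p q).p u) = (1 - p) * n := by
    simp only [gG_p, Finset.sum_const, Finset.card_univ, Fintype.card_fin, nsmul_eq_mul]
    ring
  have hnum : (∑ u : Fin n, (1 - (gG n p q).p u) * (gG n p q).PC (gσ n) u)
      = (1 - p) * ((((n:ℝ) - 1) * p + 1) * ∑ i ∈ Finset.range n, q ^ i) := by
    have h1 : ∀ u : Fin n, (1 - (gG n p q).p u) * (gG n p q).PC (gσ n) u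
        = (1 - p) * ((((n:ℝ) - 1) * p + 1) * q ^ u.1) := by
      intro u
      rw [gPC, gG_p]
      ring
    rw [Finset.sum_congr rfl fun u _ => h1 u, ← Finset.mul_sum, ← Finset.mul_sum,
      Fin.sum_univ_eq_sum_range (fun i => q ^ i) n]
  rw [hnum, hden, show (1 - p) * ((((n:ℝ) - 1) * p + 1) * ∑ i ∈ Finset.range n, q ^ i)
      / ((1 - p) * n)
      = (((n:ℝ) - 1) * p + 1) * (∑ i ∈ Finset.range n, q ^ i) / n from
    mul_div_mul_left _ _ (fun hh => by have := sub_eq_zero.mp hh; linarith)]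

lemma gload_succ (n : ℕ) (i : Fin n) : Game.load (gs n) i.succ = 1 := by
  unfold Game.load
  have : (Finset.univ.filter fun v : Fin n => i.succ ∈ gs n v) = {i} := by
    ext v
    simp only [Finset.mem_filter, Finset.mem_univ, true_and, gs, Finset.mem_singleton]
    constructor
    · intro h
      exact (Fin.succ_inj.mp h.symm)
    · intro h
      rw [h]
  rw [this, Finset.card_singleton]

lemma gload_zero (n : ℕ) : Game.load (gs n) (0 : Fin (n+1)) = 0 := by
  unfold Game.load
  rw [Finset.card_eq_zero, Finset.filter_eq_empty_iff]
  intro v _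
  simp only [gs, Finset.mem_singleton]
  exact fun h => Fin.succ_ne_zero v h.symm

lemma gCSC (n : ℕ) (p q : ℝ) :
    (gG n p q).CSC (gs n) = (∑ i ∈ Finset.range n, q ^ (min (i+1) (n-1))) / n := by
  unfold Game.CSC
  rw [Fintype.card_fin]
  congr 1
  rw [Fin.sum_univ_succ]
  rw [gload_zero]
  simp only [Nat.cast_zero, zero_mul, zero_add]
  have h1 : ∀ i : Fin n, (Game.load (gs n) i.succ : ℝ)
      * (gG n p q).f i.succ (Game.load (gs n) i.succ) = q ^ (min (i.1+1) (n-1)) := by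
    intro i
    rw [gload_succ, gG_f]
    unfold gA
    rw [Fin.val_succ]
    push_cast
    ring
  rw [Finset.sum_congr rfl fun i _ => h1 i,
    Fin.sum_univ_eq_sum_range (fun i => q ^ (min (i+1) (n-1))) n]

lemma gCSC_nonneg (n : ℕ) (p q : ℝ) (hq : 0 ≤ q) (s : Game.CProfile (Fin n) (Fin (n+1))) :
    0 ≤ (gG n p q).CSC s := by
  unfold Game.CSC
  apply div_nonneg _ (Nat.cast_nonneg _)
  refine Finset.sum_nonneg fun e _ => ?_
  refine mul_nonneg (Nat.cast_nonneg _) ?_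
  rw [gG_f]
  exact mul_nonneg (pow_nonneg hq _) (Nat.cast_nonneg _)

lemma gs_valid (n : ℕ) (p q : ℝ) : (gG n p q).CValid (gs n) := by
  intro u
  rw [gG_S]
  simp [gs]

lemma gCOpt_le (n : ℕ) (p q : ℝ) (hq : 0 ≤ q) :
    (gG n p q).COpt ≤ (gG n p q).CSC (gs n) := by
  have hbdd : BddBelow {x | ∃ s : Game.CProfile (Fin n) (Fin (n+1)),
      (gG n p q).CValid s ∧ (gG n p q).CSC s = x} := by
    refine ⟨0, fun x hx => ?_⟩
    obtain ⟨s, _, hs⟩ := hx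
    exact hs ▸ gCSC_nonneg n p q hq s
  exact csInf_le hbdd ⟨gs n, gs_valid n p q, rfl⟩

lemma gCOpt_nonneg (n : ℕ) (p q : ℝ) (hq : 0 ≤ q) : 0 ≤ (gG n p q).COpt := by
  have hne : ({x | ∃ s : Game.CProfile (Fin n) (Fin (n+1)),
      (gG n p q).CValid s ∧ (gG n p q).CSC s = x} : Set ℝ).Nonempty :=
    ⟨_, gs n, gs_valid n p q, rfl⟩
  refine le_csInf hne fun x hx => ?_
  obtain ⟨s, _, hs⟩ := hx
  exact hs ▸ gCSC_nonneg n p q hq s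

lemma gBNE (n : ℕ) (p q : ℝ) (hn : 0 < n) (hp0 : 0 ≤ p) (hp : p < 1) (hq0 : 0 ≤ q)
    (hq2 : 1 + ((n:ℝ) - 1) * p = q * (2 - p + ((n:ℝ) - 1) * p)) :
    (gG n p q).IsPureBNE (gσ n) := by
  have hD0 : 0 ≤ ((n:ℝ) - 1) * p := by
    have : (1:ℝ) ≤ n := by exact_mod_cast hn
    nlinarith
  constructor
  · intro u
    rw [gG_S]
    constructor
    · simp [gσ]
    · simp [gσ]
  · intro u t ht
    rw [gG_S] at ht
    simp only [Finset.mem_insert, Finset.mem_singleton] at ht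
    constructor
    · -- selfish condition
      rcases ht with rfl | rfl | rfl
      · -- t = {u.castSucc} : no change
        have heq : Game.updS (gσ n) u {u.castSucc} = gσ n := by
          unfold Game.updS
          rw [show ({u.castSucc}, (gσ n u).2) = gσ n u from rfl]
          exact Function.update_eq_self u (gσ n)
        rw [heq]
      · -- t = {u.succ}
        rw [PC_updS, Finset.sum_singleton, gPC, gmal, gG_f]
        rcases lt_or_eq_of_le (Nat.succ_le_of_lt u.isLt) with hlt | hEq
        · rw [gself_succ_lt n p q u hlt]
          unfold gA
          rw [Fin.val_succ, min_eq_left (by omega)]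
          apply le_of_eq
          rw [show q ^ (u.1 + 1) = q ^ u.1 * q from pow_succ q u.1]
          calc q ^ u.1 * (((n:ℝ) - 1) * p + 1)
              = q ^ u.1 * (1 + ((n:ℝ) - 1) * p) := by ring
            _ = q ^ u.1 * (q * (2 - p + ((n:ℝ) - 1) * p)) := by rw [hq2]
            _ = q ^ u.1 * q * (1 - p + ((n:ℝ) - 1) * p + 1) := by ring
        · rw [gself_succ_last n p q u hEq]
          unfold gA
          rw [Fin.val_succ, show min (u.1 + 1) (n - 1) = u.1 from by omega]
          apply le_of_eq
          ring
      · -- t = univ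
        rw [PC_updS, gPC]
        have hterm : q ^ u.1 * (((n:ℝ) - 1) * p + 1)
            = (gG n p q).f u.castSucc ((gG n p q).selfLoadEx (gσ n) u u.castSucc
                + (gG n p q).malLoadEx (gσ n) u u.castSucc + 1) := by
          rw [gself_cast, gmal, gG_f]
          unfold gA
          rw [Fin.coe_castSucc, min_eq_left (by have := u.isLt; omega)]
          ring
        rw [hterm]
        refine Finset.single_le_sum (f := fun e => (gG n p q).f e
          ((gG n p q).selfLoadEx (gσ n) u e + (gG n p q).malLoadEx (gσ n) u e + 1))
          (fun e _ => ?_) (Finset.mem_univ u.castSucc)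
        rw [gG_f, gmal]
        apply mul_nonneg (pow_nonneg hq0 _)
        have := selfLoadEx_nonneg' (gG n p q) (gσ n) u e (fun v => by rw [gG_p]; linarith)
        linarith
    · -- malicious condition
      apply SC_updM_le
      · intro e x y hxy
        rw [gG_f, gG_f]
        exact mul_le_mul_of_nonneg_left hxy (pow_nonneg hq0 _)
      · intro w; rw [gG_p]; exact hp0
      · intro w; rw [gG_p]; exact hp.le
      · exact Finset.subset_univ t
      · have h1 : (1:ℝ) ≤ n := by exact_mod_cast hn
        simp only [gG_p, Finset.sum_const, Finset.card_univ, Fintype.card_fin,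
          nsmul_eq_mul, Fintype.card_fin]
        nlinarith

end Construction

section Arith

lemma main_arith (Δ ε : ℝ) (hΔ : 0 < Δ) (hε : 0 < ε) :
    ∃ n : ℕ, 3 ≤ n ∧ 2 * Δ ≤ (n:ℝ) ∧ 4 * Δ / ε ≤ (n:ℝ) ∧
      (Δ + 2) * (1 - 1 / (2 * (2 + Δ))) ^ (n - 2) ≤ ε / 2 := by
  set Q : ℝ := 1 - 1 / (2 * (2 + Δ)) with hQ
  have hpos : (0:ℝ) < 2 * (2 + Δ) := by linarith
  have hQ0 : 0 ≤ Q := by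
    rw [hQ]
    have : 1 / (2 * (2 + Δ)) ≤ 1 := by
      rw [div_le_one hpos]; linarith
    linarith
  have hQ1 : Q < 1 := by
    rw [hQ]
    have : 0 < 1 / (2 * (2 + Δ)) := by positivity
    linarith
  obtain ⟨k, hk⟩ := exists_pow_lt_of_lt_one
    (show (0:ℝ) < ε / (2 * (Δ + 2)) by positivity) hQ1
  refine ⟨max (k + 2) (max 3 (⌈2 * Δ⌉₊ + ⌈4 * Δ / ε⌉₊)), ?_, ?_, ?_, ?_⟩
  · have : 3 ≤ max 3 (⌈2 * Δ⌉₊ + ⌈4 * Δ / ε⌉₊) := le_max_left _ _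
    omega
  · have h1 : (⌈2 * Δ⌉₊ : ℕ) ≤ max (k + 2) (max 3 (⌈2 * Δ⌉₊ + ⌈4 * Δ / ε⌉₊)) := by
      have : ⌈2 * Δ⌉₊ ≤ ⌈2 * Δ⌉₊ + ⌈4 * Δ / ε⌉₊ := Nat.le_add_right _ _
      omega
    calc 2 * Δ ≤ (⌈2 * Δ⌉₊ : ℝ) := Nat.le_ceil _
      _ ≤ _ := by exact_mod_cast h1
  · have h1 : (⌈4 * Δ / ε⌉₊ : ℕ) ≤ max (k + 2) (max 3 (⌈2 * Δ⌉₊ + ⌈4 * Δ / ε⌉₊)) := by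
      have : ⌈4 * Δ / ε⌉₊ ≤ ⌈2 * Δ⌉₊ + ⌈4 * Δ / ε⌉₊ := Nat.le_add_left _ _
      omega
    calc 4 * Δ / ε ≤ (⌈4 * Δ / ε⌉₊ : ℝ) := Nat.le_ceil _
      _ ≤ _ := by exact_mod_cast h1
  · have hk2 : k ≤ max (k + 2) (max 3 (⌈2 * Δ⌉₊ + ⌈4 * Δ / ε⌉₊)) - 2 := by
      have : k + 2 ≤ max (k + 2) (max 3 (⌈2 * Δ⌉₊ + ⌈4 * Δ / ε⌉₊)) := le_max_left _ _
      omega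
    have hpow : Q ^ (max (k + 2) (max 3 (⌈2 * Δ⌉₊ + ⌈4 * Δ / ε⌉₊)) - 2) ≤ Q ^ k :=
      pow_le_pow_of_le_one hQ0 hQ1.le hk2
    have h2 : (Δ + 2) * Q ^ (max (k + 2) (max 3 (⌈2 * Δ⌉₊ + ⌈4 * Δ / ε⌉₊)) - 2)
        ≤ (Δ + 2) * (ε / (2 * (Δ + 2))) := by
      apply mul_le_mul_of_nonneg_left _ (by linarith)
      exact le_trans hpow hk.le
    calc (Δ + 2) * Q ^ (max (k + 2) (max 3 (⌈2 * Δ⌉₊ + ⌈4 * Δ / ε⌉₊)) - 2)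
        ≤ (Δ + 2) * (ε / (2 * (Δ + 2))) := h2
      _ = ε / 2 := by field_simp

lemma key_ineq (n : ℕ) (Δ ε p D q : ℝ) (hΔ : 0 < Δ) (hε : 0 < ε) (hn3 : 3 ≤ n)
    (hp : p = Δ / n) (hD : D = ((n:ℝ) - 1) * p) (hq : q = (1 + D) / (2 - p + D))
    (h2Δ : 2 * Δ ≤ (n:ℝ)) (h4 : 4 * Δ / ε ≤ (n:ℝ))
    (hpow : (Δ + 2) * (1 - 1 / (2 * (2 + Δ))) ^ (n - 2) ≤ ε / 2)
    (hC : 0 ≤ Δ + 2 - ε) :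
    (Δ + 2 - ε) * (∑ i ∈ Finset.range n, q ^ (min (i + 1) (n - 1)))
      ≤ (1 + D) * ∑ i ∈ Finset.range n, q ^ i := by
  have hn : (0:ℝ) < n := by
    have : (3:ℝ) ≤ n := by exact_mod_cast hn3
    linarith
  have hp0 : 0 < p := by rw [hp]; positivity
  have hnp : (n:ℝ) * p = Δ := by rw [hp]; field_simp
  have hp2 : p ≤ 1 / 2 := by
    rw [hp, div_le_iff₀ hn] -- Δ ≤ 1/2 * n
    linarith
  have hDe : D = Δ - p := by rw [hD, sub_mul, one_mul, hnp]
  have hn1 : (1:ℝ) ≤ n := by exact_mod_cast (by omega : 1 ≤ n)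
  have hpΔ : p ≤ Δ := by
    rw [hp, div_le_iff₀ hn]
    nlinarith
  have hD0 : 0 ≤ D := by rw [hDe]; linarith
  have hden : 0 < 2 - p + D := by linarith
  have hq0 : 0 < q := by rw [hq]; positivity
  have hq2 : 1 + D = q * (2 - p + D) := by rw [hq]; field_simp
  set Q : ℝ := 1 - 1 / (2 * (2 + Δ)) with hQdef
  have hqQ : q ≤ Q := by
    have h1m : 1 - q = (1 - p) / (2 - p + D) := by
      rw [hq]
      field_simp
      ring
    have hDΔ : D ≤ Δ := by linarith
    have hcross : 1 / (2 * (2 + Δ)) ≤ (1 - p) / (2 - p + D) := by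
      rw [div_le_div_iff₀ (by linarith) hden]
      nlinarith
    rw [hQdef]
    linarith [h1m ▸ hcross]
  have hεp : ε / 2 ≤ ε - 2 * p := by
    have h4' : 4 * Δ ≤ ε * n := by
      rw [div_le_iff₀ hε] at h4
      linarith
    have hpε : p ≤ ε / 4 := by
      rw [hp, div_le_iff₀ hn]
      linarith
    linarith
  obtain ⟨m, rfl⟩ : ∃ m, n = m + 1 := ⟨n - 1, by omega⟩
  have hm2 : 2 ≤ m := by omega
  have hm1 : (m + 1) - 1 = m := by omega
  have hm1' : (m + 1) - 2 = m - 1 := by omega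
  -- split the opt sum
  have hsplit : ∑ i ∈ Finset.range (m + 1), q ^ (min (i + 1) ((m + 1) - 1))
      = q * (∑ i ∈ Finset.range m, q ^ i) + q ^ m := by
    rw [hm1, Finset.sum_range_succ, min_eq_right (by omega), Finset.mul_sum]
    congr 1
    refine Finset.sum_congr rfl fun i hi => ?_
    rw [min_eq_left (by have := Finset.mem_range.mp hi; omega)]
    ring
  rw [hsplit]
  set S : ℝ := ∑ i ∈ Finset.range (m + 1), q ^ i with hSdef
  set Sm : ℝ := ∑ i ∈ Finset.range m, q ^ i with hSmdef
  have hSmS : Sm ≤ S := by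
    rw [hSdef, hSmdef, Finset.sum_range_succ]
    nlinarith [pow_nonneg hq0.le m]
  have hS1 : 1 ≤ S := by
    rw [hSdef]
    have := Finset.single_le_sum (f := fun i => q ^ i)
      (fun i _ => pow_nonneg hq0.le i) (Finset.mem_range.mpr (Nat.succ_pos m))
    simpa using this
  have hkey : (Δ + 2 - ε) * q ^ m ≤ q * (ε - 2 * p) * S := by
    have h1 : (Δ + 2 - ε) * q ^ (m - 1) ≤ ε / 2 := by
      calc (Δ + 2 - ε) * q ^ (m - 1) ≤ (Δ + 2) * Q ^ (m - 1) := by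
            apply mul_le_mul (by linarith) (pow_le_pow_left₀ hq0.le hqQ _)
              (pow_nonneg hq0.le _) (by linarith)
        _ ≤ ε / 2 := by rw [← hm1'] at *; exact hpow
    have h2 : q ^ m = q ^ (m - 1) * q := by
      conv_lhs => rw [show m = (m - 1) + 1 by omega]
      rw [pow_succ]
    calc (Δ + 2 - ε) * q ^ m = ((Δ + 2 - ε) * q ^ (m - 1)) * q := by rw [h2]; ring
      _ ≤ (ε / 2) * q := mul_le_mul_of_nonneg_right h1 hq0.le
      _ ≤ (ε - 2 * p) * q := mul_le_mul_of_nonneg_right hεp hq0.le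
      _ = q * (ε - 2 * p) * 1 := by ring
      _ ≤ q * (ε - 2 * p) * S := by
          apply mul_le_mul_of_nonneg_left hS1
          have : 0 < ε - 2 * p := by linarith
          positivity
  have hCq : (Δ + 2 - ε) * (q * Sm) ≤ (Δ + 2 - ε) * (q * S) :=
    mul_le_mul_of_nonneg_left (mul_le_mul_of_nonneg_left hSmS hq0.le) hC
  have hfin : 2 - p + D = (Δ + 2 - ε) + (ε - 2 * p) := by rw [hDe]; ring
  calc (Δ + 2 - ε) * (q * Sm + q ^ m)
      = (Δ + 2 - ε) * (q * Sm) + (Δ + 2 - ε) * q ^ m := by ring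
    _ ≤ (Δ + 2 - ε) * (q * S) + q * (ε - 2 * p) * S := add_le_add hCq hkey
    _ = q * (2 - p + D) * S := by rw [hfin]; ring
    _ = (1 + D) * S := by rw [hq2]

end Arith


theorem price_of_byzantine_anarchy_lower_bound (Δ ε : ℝ) (hΔ : 0 < Δ) (hε : 0 < ε) :
    ∃ (n r : ℕ) (p : ℝ) (G : Game (Fin n) (Fin r)) (a : Fin r → ℝ),
      3 ≤ n ∧ 2 ≤ r ∧ 0 < p ∧ p < 1 ∧ (n : ℝ) * p = Δ ∧
      -- identical type probabilities
      (∀ u, G.p u = p) ∧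
      -- linear latency functions with positive slopes
      (∀ e, 0 < a e) ∧ (∀ e x, G.f e x = a e * x) ∧
      -- strategy sets are nonempty sets of nonempty sets of resources
      (∀ u, (G.S u).Nonempty) ∧ (∀ u, ∀ t ∈ G.S u, t.Nonempty) ∧
      ∃ σ : Game.Profile (Fin n) (Fin r),
        G.IsPureBNE σ ∧ (Δ + 2 - ε) * G.COpt ≤ G.SC σ := by
  obtain ⟨n, hn3, h2Δ, h4, hpow⟩ := main_arith Δ ε hΔ hε
  have hn0 : 0 < n := by omega
  have hn : (0:ℝ) < n := by exact_mod_cast hn0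
  set p : ℝ := Δ / n with hpdef
  have hp0 : 0 < p := div_pos hΔ hn
  have hp2 : p ≤ 1 / 2 := by rw [hpdef, div_le_iff₀ hn]; linarith
  have hp1 : p < 1 := lt_of_le_of_lt hp2 (by norm_num)
  set D : ℝ := ((n:ℝ) - 1) * p with hDdef
  have hn1 : (1:ℝ) ≤ n := by exact_mod_cast (by omega : 1 ≤ n)
  have hD0 : 0 ≤ D := by rw [hDdef]; exact mul_nonneg (by linarith) hp0.le
  have hden : 0 < 2 - p + D := by linarith
  set q : ℝ := (1 + D) / (2 - p + D) with hqdef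
  have hq0 : 0 < q := div_pos (by linarith) hden
  have hq2 : 1 + D = q * (2 - p + D) := by rw [hqdef]; field_simp
  refine ⟨n, n + 1, p, gG n p q, gA n q, hn3, by omega, hp0, hp1, ?_,
    fun u => rfl, fun e => pow_pos hq0 _, fun e x => rfl, ?_, ?_,
    gσ n, gBNE n p q hn0 hp0.le hp1 hq0.le hq2, ?_⟩
  · rw [hpdef]; field_simp
  · intro u
    exact ⟨Finset.univ, by rw [gG_S]; simp⟩
  · intro u t ht
    rw [gG_S] at ht
    simp only [Finset.mem_insert, Finset.mem_singleton] at ht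
    rcases ht with rfl | rfl | rfl
    · exact Finset.singleton_nonempty _
    · exact Finset.singleton_nonempty _
    · exact Finset.univ_nonempty
  · rcases le_or_gt 0 (Δ + 2 - ε) with hC | hC
    · have h1 : (Δ + 2 - ε) * (gG n p q).COpt
          ≤ (Δ + 2 - ε) * (gG n p q).CSC (gs n) :=
        mul_le_mul_of_nonneg_left (gCOpt_le n p q hq0.le) hC
      refine le_trans h1 ?_
      rw [gCSC, gSC n p q hn0 hp1,
        show ((n:ℝ) - 1) * p + 1 = 1 + D from by rw [hDdef]; ring]
      have hkey := key_ineq n Δ ε p D q hΔ hε hn3 hpdef hDdef hqdef h2Δ h4 hpow hC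
      calc (Δ + 2 - ε) * ((∑ i ∈ Finset.range n, q ^ (min (i + 1) (n - 1))) / n)
          = ((Δ + 2 - ε) * ∑ i ∈ Finset.range n, q ^ (min (i + 1) (n - 1))) / n := by
            ring
        _ ≤ ((1 + D) * ∑ i ∈ Finset.range n, q ^ i) / n :=
            (div_le_div_iff_of_pos_right hn).mpr hkey
        _ = (1 + D) * (∑ i ∈ Finset.range n, q ^ i) / n := by ring
    · have h1 : (Δ + 2 - ε) * (gG n p q).COpt ≤ 0 := by
        have h2 := gCOpt_nonneg n p q hq0.le
        nlinarith
      refine le_trans h1 ?_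
      rw [gSC n p q hn0 hp1,
        show ((n:ℝ) - 1) * p + 1 = 1 + D from by rw [hDdef]; ring]
      apply div_nonneg _ hn.le
      apply mul_nonneg (by linarith)
      exact Finset.sum_nonneg fun i _ => pow_nonneg hq0.le i
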